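/- For a vertical group G = V × ℝ (V a linear subspace of ℝ^{2D}), the Cygan–Korányi distance of any element g to G equals the Euclidean distance of g to G; both equal the Euclidean distance of π(g) to V in ℝ^{2D}. -/
import Mathlib


open scoped BigOperators

/-- Points of ℝ^{2D}: pairs (p, q) of vectors in ℝ^D. -/
abbrev HVec (D : ℕ) := (Fin D → ℝ) × (Fin D → ℝ)

/-- The standard symplectic form ω on ℝ^{2D}. -/
def symp {D : ℕ} (v w : HVec D) : ℝ := ∑ i, (v.1 i * w.2 i - v.2 i * w.1 i)

/-- The (2D+1)-dimensional Heisenberg group, as a set ℝ^{2D} × ℝ. -/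
@[ext] structure Heis (D : ℕ) where
  v : HVec D
  u : ℝ

namespace Heis
variable {D : ℕ}

lemma symp_self (v : HVec D) : symp v v = 0 := by
  simp only [symp]
  exact Finset.sum_eq_zero (fun i _ => by ring)

lemma symp_add_left (v w x : HVec D) : symp (v + w) x = symp v x + symp w x := by
  simp only [symp, Prod.fst_add, Prod.snd_add, Pi.add_apply, ← Finset.sum_add_distrib]
  exact Finset.sum_congr rfl (fun i _ => by ring)

lemma symp_add_right (v w x : HVec D) : symp v (w + x) = symp v w + symp v x := by
  simp only [symp, Prod.fst_add, Prod.snd_add, Pi.add_apply, ← Finset.sum_add_distrib]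
  exact Finset.sum_congr rfl (fun i _ => by ring)

lemma symp_neg_left (v w : HVec D) : symp (-v) w = - symp v w := by
  simp only [symp, Prod.fst_neg, Prod.snd_neg, Pi.neg_apply, ← Finset.sum_neg_distrib]
  exact Finset.sum_congr rfl (fun i _ => by ring)

noncomputable instance : Mul (Heis D) := ⟨fun g h => ⟨g.v + h.v, g.u + h.u + (1/2) * symp g.v h.v⟩⟩
instance : One (Heis D) := ⟨⟨0, 0⟩⟩
instance : Inv (Heis D) := ⟨fun g => ⟨-g.v, -g.u⟩⟩

@[simp] lemma mul_v (g h : Heis D) : (g * h).v = g.v + h.v := rfl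
@[simp] lemma mul_u (g h : Heis D) : (g * h).u = g.u + h.u + (1/2) * symp g.v h.v := rfl
@[simp] lemma one_v : (1 : Heis D).v = 0 := rfl
@[simp] lemma one_u : (1 : Heis D).u = 0 := rfl
@[simp] lemma inv_v (g : Heis D) : g⁻¹.v = -g.v := rfl
@[simp] lemma inv_u (g : Heis D) : g⁻¹.u = -g.u := rfl

noncomputable instance : Group (Heis D) where
  mul_assoc g h k := by
    ext <;> simp [add_assoc, symp_add_left, symp_add_right] <;> ring
  one_mul g := by ext <;> simp [symp]
  mul_one g := by ext <;> simp [symp]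
  inv_mul_cancel g := by
    ext <;> simp [symp_neg_left, symp_self]

/-- Dilation by r. -/
def dil (r : ℝ) (g : Heis D) : Heis D := ⟨r • g.v, r ^ 2 * g.u⟩

/-- The squared Euclidean norm on ℝ^{2D}. -/
def vnormSq {D : ℕ} (v : HVec D) : ℝ := ∑ i, ((v.1 i) ^ 2 + (v.2 i) ^ 2)

/-- The Cygan–Korányi norm. -/
noncomputable def nCK (g : Heis D) : ℝ := (vnormSq g.v ^ 2 + g.u ^ 2) ^ ((1 : ℝ) / 4)

/-- The Cygan–Korányi (right-invariant) distance. -/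
noncomputable def dCK (g h : Heis D) : ℝ := nCK (g * h⁻¹)

/-- The Euclidean distance on ℝ^{2D+1}. -/
noncomputable def dE (g h : Heis D) : ℝ := Real.sqrt (vnormSq (g.v - h.v) + (g.u - h.u) ^ 2)

/-- Heis D as a plain vector space (ℝ^{2D+1}). -/
abbrev Vec (D : ℕ) := HVec D × ℝ

def toVec (g : Heis D) : Vec D := (g.v, g.u)

instance : TopologicalSpace (Heis D) := TopologicalSpace.induced (toVec (D := D)) inferInstance

/-- generators of the discrete Heisenberg group -/
def xgen (i : Fin D) : Heis D := ⟨(Pi.single i 1, 0), 0⟩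
def ygen (i : Fin D) : Heis D := ⟨(0, Pi.single i 1), 0⟩

/-- the discrete Heisenberg group -/
noncomputable def discH (D : ℕ) : Subgroup (Heis D) :=
  Subgroup.closure ({g | ∃ i, g = xgen i ∨ g = ygen i})

/-- the vertical axis (center) as a set -/
def zAxis (D : ℕ) : Set (Heis D) := {g | g.v = 0}

end Heis

lemma symp_neg_right' {D : ℕ} (v w : HVec D) : symp v (-w) = - symp v w := by
  simp only [symp, Prod.fst_neg, Prod.snd_neg, Pi.neg_apply, ← Finset.sum_neg_distrib]
  exact Finset.sum_congr rfl (fun i _ => by ring)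

lemma vnormSq_nonneg' {D : ℕ} (v : HVec D) : 0 ≤ Heis.vnormSq v :=
  Finset.sum_nonneg fun i _ => by positivity

lemma dCK_eq' {D : ℕ} (g h : Heis D) :
    Heis.dCK g h = (Heis.vnormSq (g.v - h.v) ^ 2
      + (g.u - h.u - (1/2) * symp g.v h.v) ^ 2) ^ ((1:ℝ)/4) := by
  simp only [Heis.dCK, Heis.nCK, Heis.mul_v, Heis.mul_u, Heis.inv_v, Heis.inv_u,
    symp_neg_right']
  ring_nf

lemma quarter_eq_sqrt' (A : ℝ) (hA : 0 ≤ A) : (A ^ 2) ^ ((1:ℝ)/4) = Real.sqrt A := by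
  rw [Real.sqrt_eq_rpow, ← Real.rpow_natCast A 2, ← Real.rpow_mul hA]
  norm_num

lemma sInf_eq_sInf' {S T : Set ℝ} (hS : S.Nonempty) (hT : T.Nonempty)
    (hS0 : ∀ x ∈ S, 0 ≤ x) (hT0 : ∀ x ∈ T, 0 ≤ x)
    (h1 : ∀ a ∈ S, ∃ b ∈ T, b ≤ a) (h2 : ∀ b ∈ T, ∃ a ∈ S, a ≤ b) :
    sInf S = sInf T := by
  have hSb : BddBelow S := ⟨0, hS0⟩
  have hTb : BddBelow T := ⟨0, hT0⟩
  apply le_antisymm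
  · refine le_csInf hT (fun b hb => ?_)
    obtain ⟨a, ha, hab⟩ := h2 b hb
    exact (csInf_le hSb ha).trans hab
  · refine le_csInf hS (fun a ha => ?_)
    obtain ⟨b, hb, hba⟩ := h1 a ha
    exact (csInf_le hTb hb).trans hba

/-- for a vertical group G = V × ℝ, the Cygan–Korányi distance of
any point to G equals its Euclidean distance to G, and both equal the Euclidean
distance from π(g) to V. -/
theorem vertical_dist (D : ℕ) (V : Submodule ℝ (HVec D)) (g : Heis D) :
    sInf ((fun h => Heis.dCK g h) '' {h : Heis D | h.v ∈ V}) =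
      sInf ((fun h => Heis.dE g h) '' {h : Heis D | h.v ∈ V}) ∧
    sInf ((fun h => Heis.dCK g h) '' {h : Heis D | h.v ∈ V}) =
      sInf ((fun w => Real.sqrt (Heis.vnormSq (g.v - w))) '' (V : Set (HVec D))) := by
  set S1 := (fun h => Heis.dCK g h) '' {h : Heis D | h.v ∈ V}
  set S2 := (fun h => Heis.dE g h) '' {h : Heis D | h.v ∈ V}
  set S3 := (fun w => Real.sqrt (Heis.vnormSq (g.v - w))) '' (V : Set (HVec D))
  have hmem0 : (⟨0, 0⟩ : Heis D) ∈ {h : Heis D | h.v ∈ V} := V.zero_mem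
  have hS1ne : S1.Nonempty := ⟨_, ⟨_, hmem0, rfl⟩⟩
  have hS2ne : S2.Nonempty := ⟨_, ⟨_, hmem0, rfl⟩⟩
  have hS3ne : S3.Nonempty := ⟨_, ⟨0, V.zero_mem, rfl⟩⟩
  have hS1nn : ∀ x ∈ S1, 0 ≤ x := by
    rintro x ⟨h, -, rfl⟩
    simp only [dCK_eq']
    positivity
  have hS2nn : ∀ x ∈ S2, 0 ≤ x := by
    rintro x ⟨h, -, rfl⟩; exact Real.sqrt_nonneg _
  have hS3nn : ∀ x ∈ S3, 0 ≤ x := by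
    rintro x ⟨w, -, rfl⟩; exact Real.sqrt_nonneg _
  have h13 : sInf S1 = sInf S3 := by
    apply sInf_eq_sInf' hS1ne hS3ne hS1nn hS3nn
    · rintro a ⟨h, hmem, rfl⟩
      refine ⟨Real.sqrt (Heis.vnormSq (g.v - h.v)), ⟨h.v, hmem, rfl⟩, ?_⟩
      simp only [dCK_eq']
      rw [← quarter_eq_sqrt' _ (vnormSq_nonneg' _)]
      apply Real.rpow_le_rpow (by positivity) (by nlinarith [sq_nonneg (g.u - h.u - (1/2) * symp g.v h.v)]) (by norm_num)
    · rintro b ⟨w, hw, rfl⟩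
      refine ⟨Heis.dCK g ⟨w, g.u - (1/2) * symp g.v w⟩, ⟨⟨w, g.u - (1/2) * symp g.v w⟩, hw, rfl⟩, ?_⟩
      simp only [dCK_eq']
      rw [show g.u - (g.u - (1/2) * symp g.v w) - (1/2) * symp g.v w = 0 by ring]
      rw [show (0:ℝ)^2 = 0 by ring, add_zero, quarter_eq_sqrt' _ (vnormSq_nonneg' _)]
  have h23 : sInf S2 = sInf S3 := by
    apply sInf_eq_sInf' hS2ne hS3ne hS2nn hS3nn
    · rintro a ⟨h, hmem, rfl⟩
      refine ⟨Real.sqrt (Heis.vnormSq (g.v - h.v)), ⟨h.v, hmem, rfl⟩, ?_⟩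
      simp only [Heis.dE]
      exact Real.sqrt_le_sqrt (by nlinarith [sq_nonneg (g.u - h.u)])
    · rintro b ⟨w, hw, rfl⟩
      refine ⟨Heis.dE g ⟨w, g.u⟩, ⟨⟨w, g.u⟩, hw, rfl⟩, ?_⟩
      simp [Heis.dE]
  exact ⟨h13.trans h23.symm, h13⟩
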